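/- The Clifford-Gegenbauer polynomials on B(1) satisfy the recursion relations C^α_{2ℓ+1,μ,k}(x̱) = -2(α+1) x̱ C^{α+1}_{2ℓ,μ,k}(x̱) + (1-|x̱|²) D_k[C^{α+1}_{2ℓ,μ,k}(x̱)] and C^α_{2ℓ+2,μ,k}(x̱) = -2(α+1) x̱ C^{α+1}_{2ℓ+1,μ,k}(x̱) + (1-|x̱|²)(2k (x̱/|x̱|²) C^{α+1}_{2ℓ+1,μ,k}(x̱) + D_k[C^{α+1}_{2ℓ+1,μ,k}(x̱)]). -/

import Mathlib

open scoped BigOperators RealInnerProductSpace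
open MeasureTheory

namespace CGDunkl

/-- The underlying Euclidean space `ℝ^m`. -/
abbrev V (m : ℕ) := EuclideanSpace ℝ (Fin m)

/-- The quadratic form `x ↦ -‖x‖²` on `ℝ^m`, whose Clifford algebra is `ℝ_{0,m}`
(so that `eᵢ eⱼ + eⱼ eᵢ = -2 δᵢⱼ`). -/
noncomputable def Q (m : ℕ) : QuadraticForm ℝ (V m) :=
  - (LinearMap.BilinMap.toQuadraticMap (innerₗ (F := V m)))

/-- A (normed) model of the Clifford algebra `ℝ_{0,m}`: an `ℝ`-algebra isomorphism from
the Clifford algebra of `-‖·‖²` on `ℝ^m` to a normed algebra `A`. -/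
abbrev CliffordModel (m : ℕ) (A : Type*) [NormedRing A] [NormedAlgebra ℝ A] :=
  CliffordAlgebra (Q m) ≃ₐ[ℝ] A

variable {m : ℕ} {A : Type*} [NormedRing A] [NormedAlgebra ℝ A]

/-- The Clifford generators `e_j`. -/
noncomputable def ee (F : CliffordModel m A) (j : Fin m) : A :=
  F (CliffordAlgebra.ι (Q m) (EuclideanSpace.single j 1))

/-- The vector variable `x̱ = Σⱼ eⱼ xⱼ`. -/
noncomputable def xv (F : CliffordModel m A) (x : V m) : A :=
  F (CliffordAlgebra.ι (Q m) x)

/-- Clifford conjugation, the anti-involution with `conj eᵢ = -eᵢ`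
(the composition of grade reversion and grade involution). -/
noncomputable def cconj (F : CliffordModel m A) (a : A) : A :=
  F (CliffordAlgebra.reverse (CliffordAlgebra.involute (F.symm a)))

/-- The reflection in the hyperplane orthogonal to `α`. -/
noncomputable def reflect {m : ℕ} (α x : V m) : V m :=
  x - ((2 * ⟪α, x⟫) / ⟪α, α⟫) • α

/-- The data of a (reduced, normalized) root system `R = R₊ ∪ (-R₊)` in `ℝ^m`
together with a nonnegative `G`-invariant multiplicity function `κ`. -/
structure DunklData (m : ℕ) where
  /-- the root system -/
  R : Finset (V m)
  /-- the positive subsystem -/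
  Rplus : Finset (V m)
  /-- the multiplicity function -/
  κ : V m → ℝ
  root_ne_zero : ∀ α ∈ R, α ≠ 0
  /-- normalization `⟨α, α⟩ = 2` -/
  norm_two : ∀ α ∈ R, ⟪α, α⟫ = (2 : ℝ)
  /-- the root system is reduced -/
  reduced : ∀ α ∈ R, ∀ c : ℝ, c • α ∈ R → c = 1 ∨ c = -1
  /-- `R` is preserved by each reflection `r_α`, `α ∈ R` -/
  stable : ∀ α ∈ R, ∀ β ∈ R, reflect α β ∈ R
  /-- `R` is the union of `R₊` and `-R₊` -/
  split : ∀ α : V m, α ∈ R ↔ (α ∈ Rplus ∨ -α ∈ Rplus)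
  pos_disjoint : ∀ α ∈ Rplus, -α ∉ Rplus
  /-- the multiplicity function is invariant under the reflection group -/
  invariant : ∀ α ∈ R, ∀ β ∈ R, κ (reflect α β) = κ β
  nonneg : ∀ α ∈ R, 0 ≤ κ α

/-- `γ = Σ_{α ∈ R₊} κ_α`. -/
noncomputable def gammaK (D : DunklData m) : ℝ := ∑ α ∈ D.Rplus, D.κ α

/-- The Dunkl dimension `μ = m + 2γ`. -/
noncomputable def mu (D : DunklData m) : ℝ := m + 2 * gammaK D

/-- The Dunkl operator `T_i`, acting on functions with values in the Clifford algebra. -/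
noncomputable def T (D : DunklData m) (i : Fin m) (f : V m → A) (x : V m) : A :=
  fderiv ℝ f x (EuclideanSpace.single i 1) +
    ∑ α ∈ D.Rplus, (D.κ α * (α i) / ⟪α, x⟫) • (f x - f (reflect α x))

/-- The Dunkl Dirac operator `D_k = Σⱼ eⱼ T_j`. -/
noncomputable def Dirac (F : CliffordModel m A) (D : DunklData m) (f : V m → A) (x : V m) : A :=
  ∑ j : Fin m, ee F j * T D j f x

/-- The Dunkl Laplacian `Δ_k = Σᵢ Tᵢ²`. -/
noncomputable def Lap (D : DunklData m) (f : V m → A) (x : V m) : A :=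
  ∑ i : Fin m, T D i (T D i f) x

/-- The Euler operator `𝔼 = Σᵢ xᵢ ∂_{xᵢ}`. -/
noncomputable def Euler (f : V m → A) (x : V m) : A := fderiv ℝ f x x

/-- The angular Dunkl Dirac operator (Gamma operator) `Γ_k = D_k x̱ + μ + 𝔼`. -/
noncomputable def Gam (F : CliffordModel m A) (D : DunklData m) (f : V m → A) (x : V m) : A :=
  Dirac F D (fun y => xv F y * f y) x + mu D • f x + Euler f x

/-- The regular set: the complement of the hyperplane arrangement, where the pointwise
formula for the Dunkl operators is valid. -/
def Reg (D : DunklData m) : Set (V m) := {x | ∀ α ∈ D.Rplus, ⟪α, x⟫ ≠ 0}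

/-- Left solid inner Dunkl monogenic of order `k`: a smooth function, homogeneous (as a
polynomial) of degree `k`, with `D_k M = 0`. -/
def IsInner (F : CliffordModel m A) (D : DunklData m) (k : ℕ) (M : V m → A) : Prop :=
  ContDiff ℝ (⊤ : ℕ∞) M ∧ (∀ (c : ℝ) (x : V m), M (c • x) = c ^ k • M x) ∧
    ∀ x ∈ Reg D, Dirac F D M x = 0

/-- Left solid outer Dunkl monogenic of order `k`: left Dunkl monogenic on `ℝ^m ∖ {0}` and
homogeneous of degree `-(k + μ - 1)`. -/
def IsOuter (F : CliffordModel m A) (D : DunklData m) (k : ℕ) (Qf : V m → A) : Prop :=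
  ContDiffOn ℝ (⊤ : ℕ∞) Qf {x | x ≠ 0} ∧
    (∀ c : ℝ, 0 < c → ∀ x : V m, x ≠ 0 →
      Qf (c • x) = ((c : ℝ) ^ (-((k : ℝ) + mu D - 1)) : ℝ) • Qf x) ∧
    ∀ x ∈ Reg D, x ≠ 0 → Dirac F D Qf x = 0

/-- The weight function `w_k(x) = Π_{α ∈ R₊} |⟨x, α⟩|^{2 κ_α}`. -/
noncomputable def w (D : DunklData m) (x : V m) : ℝ :=
  ∏ α ∈ D.Rplus, |⟪x, α⟫| ^ (2 * D.κ α)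


variable {m : ℕ} {A : Type*} [NormedRing A] [NormedAlgebra ℝ A]

/-- The operator `D_α = (1-|x̱|²) D_k - 2(α+1) x̱` on the unit ball. -/
noncomputable def Dal (F : CliffordModel m A) (D : DunklData m) (a : ℝ)
    (f : V m → A) (x : V m) : A :=
  (1 - ‖x‖ ^ 2) • Dirac F D f x - (2 * (a + 1)) • (xv F x * f x)

/-- The Clifford-Gegenbauer polynomials on `B(1)`:
`C^α_{t,μ}(M_k) = D_α D_{α+1} ⋯ D_{α+t-1}[M_k]` (with `C^α_{0,μ}(M_k) = M_k`). -/
noncomputable def CG (F : CliffordModel m A) (D : DunklData m) :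
    ℝ → ℕ → (V m → A) → (V m → A)
  | _, 0, M => M
  | a, t + 1, M => Dal F D a (CG F D (a + 1) t M)

section Aux

variable {m : ℕ} {A : Type*} [NormedRing A] [NormedAlgebra ℝ A]

lemma Q_apply (x : V m) : Q m x = -‖x‖^2 := by
  simp only [Q, QuadraticMap.neg_apply, LinearMap.BilinMap.toQuadraticMap_apply,
    innerₗ_apply_apply, real_inner_self_eq_norm_sq]

lemma xv_mul_self (F : CliffordModel m A) (x : V m) :
    xv F x * xv F x = algebraMap ℝ A (-‖x‖^2) := by
  rw [xv, ← map_mul, CliffordAlgebra.ι_sq_scalar, AlgEquiv.commutes, Q_apply]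

lemma xv_anticomm (F : CliffordModel m A) (x y : V m) :
    xv F x * xv F y + xv F y * xv F x = algebraMap ℝ A (-(2*⟪x,y⟫)) := by
  rw [xv, xv, ← map_mul F, ← map_mul F, ← map_add F, CliffordAlgebra.ι_mul_ι_add_swap,
    AlgEquiv.commutes]
  congr 1
  rw [QuadraticMap.polar]
  simp only [Q_apply]
  rw [norm_add_sq_real]
  ring

lemma sum_single (x : V m) : ∑ j, x j • EuclideanSpace.single j (1:ℝ) = x := by
  have h := (EuclideanSpace.basisFun (Fin m) ℝ).sum_repr x
  simpa using h

lemma xv_eq_sum (F : CliffordModel m A) (x : V m) :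
    xv F x = ∑ j, x j • ee F j := by
  conv_lhs => rw [← sum_single x]
  rw [xv, map_sum, map_sum]
  simp only [_root_.map_smul, ee]

end Aux
section Aux2

variable {m : ℕ} {A : Type*} [NormedRing A] [NormedAlgebra ℝ A]

/-- `xv` as a continuous linear map. -/
noncomputable def xvL (F : CliffordModel m A) : V m →L[ℝ] A :=
  LinearMap.toContinuousLinearMap (F.toLinearMap ∘ₗ CliffordAlgebra.ι (Q m))

lemma xvL_apply (F : CliffordModel m A) (x : V m) : xvL F x = xv F x := rfl

lemma xv_eq_xvL (F : CliffordModel m A) : xv F = ⇑(xvL F) := rfl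

lemma reflect_eq {α : V m} (hα : ⟪α,α⟫ = (2:ℝ)) (x : V m) :
    reflect α x = x - ⟪α,x⟫ • α := by
  rw [reflect, hα]
  norm_num

lemma inner_reflect {α : V m} (hα : ⟪α,α⟫ = (2:ℝ)) (β x : V m) :
    ⟪β, reflect α x⟫ = ⟪reflect α β, x⟫ := by
  have hα' : ⟪α,α⟫ = (2:ℝ) := hα
  rw [reflect_eq hα, reflect_eq hα]
  simp only [inner_sub_right, inner_sub_left, real_inner_smul_right, real_inner_smul_left]
  rw [real_inner_comm α β]
  ring

lemma norm_reflect_sq {α : V m} (hα : ⟪α,α⟫ = (2:ℝ)) (x : V m) :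
    ‖reflect α x‖^2 = ‖x‖^2 := by
  rw [← real_inner_self_eq_norm_sq, ← real_inner_self_eq_norm_sq, reflect_eq hα]
  simp only [inner_sub_right, inner_sub_left, real_inner_smul_right, real_inner_smul_left]
  rw [real_inner_comm α x] at *
  rw [hα]
  ring

lemma isOpen_reg (D : DunklData m) : IsOpen (Reg D) := by
  have h : Reg D = ⋂ α ∈ D.Rplus, {x : V m | ⟪α, x⟫ ≠ 0} := by
    ext x
    simp [Reg, Set.mem_iInter]
  rw [h]
  refine isOpen_biInter_finset fun α _ => ?_
  have hc : Continuous fun x : V m => ⟪α, x⟫ := continuous_const.inner continuous_id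
  have : {x : V m | ⟪α, x⟫ ≠ 0} = (fun x : V m => ⟪α, x⟫) ⁻¹' ({0}ᶜ) := rfl
  rw [this]
  exact isOpen_compl_singleton.preimage hc

lemma mem_R_of_Rplus (D : DunklData m) {α : V m} (hα : α ∈ D.Rplus) : α ∈ D.R :=
  (D.split α).2 (Or.inl hα)

lemma inner_self_two (D : DunklData m) {α : V m} (hα : α ∈ D.Rplus) : ⟪α,α⟫ = (2:ℝ) :=
  D.norm_two α (mem_R_of_Rplus D hα)

lemma reg_reflect (D : DunklData m) {x : V m} (hx : x ∈ Reg D) {α : V m}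
    (hα : α ∈ D.Rplus) : reflect α x ∈ Reg D := by
  intro β hβ
  rw [inner_reflect (inner_self_two D hα) β x]
  have hβR : β ∈ D.R := mem_R_of_Rplus D hβ
  have hrβ : reflect α β ∈ D.R := D.stable α (mem_R_of_Rplus D hα) β hβR
  rcases (D.split _).1 hrβ with h | h
  · exact hx _ h
  · have := hx _ h
    intro hcon
    apply this
    rw [inner_neg_left, hcon, neg_zero]

lemma euler_eq {k : ℕ} {M : V m → A} (hsm : ContDiff ℝ (⊤ : ℕ∞) M)
    (hhom : ∀ (c : ℝ) (x : V m), M (c • x) = c ^ k • M x) (x : V m) :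
    fderiv ℝ M x x = (k:ℝ) • M x := by
  have hdiff : DifferentiableAt ℝ M x := (hsm.differentiable (by simp)) x
  have h1 : HasDerivAt (fun c : ℝ => M (c • x)) (fderiv ℝ M x x) 1 := by
    have hs : HasDerivAt (fun c : ℝ => c • x) x 1 := by
      simpa using (hasDerivAt_id (1:ℝ)).smul_const x
    have hM1 : HasFDerivAt M (fderiv ℝ M x) ((1:ℝ) • x) := by
      rw [one_smul]; exact hdiff.hasFDerivAt
    have h := hM1.comp_hasDerivAt 1 hs
    exact h
  have h2 : HasDerivAt (fun c : ℝ => M (c • x)) ((k:ℝ) • M x) 1 := by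
    have h : HasDerivAt (fun c : ℝ => c ^ k • M x) (((k:ℝ) * 1 ^ (k-1)) • M x) 1 :=
      (hasDerivAt_pow k 1).smul_const (M x)
    simp only [one_pow, mul_one] at h
    exact h.congr_of_eventuallyEq (Filter.Eventually.of_forall fun c => (hhom c x))
  rw [h1.unique h2]

end Aux2
section Aux3

variable {m : ℕ} {A : Type*} [NormedRing A] [NormedAlgebra ℝ A]

lemma Dirac_congr (F : CliffordModel m A) (D : DunklData m) {f g : V m → A} {x : V m}
    (hfg : f =ᶠ[nhds x] g) (hrefl : ∀ α ∈ D.Rplus, f (reflect α x) = g (reflect α x)) :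
    Dirac F D f x = Dirac F D g x := by
  have h1 : fderiv ℝ f x = fderiv ℝ g x := hfg.fderiv_eq
  have h2 : f x = g x := hfg.eq_of_nhds
  unfold Dirac T
  refine Finset.sum_congr rfl fun j _ => ?_
  rw [h1, h2]
  congr 1
  refine congrArg _ (Finset.sum_congr rfl fun α hα => ?_)
  rw [hrefl α hα]

lemma sum_ee_mul (F : CliffordModel m A) (α : V m) (c t : ℝ) (w : A) :
    ∑ j, (c * α j / t) • (ee F j * w) = (c / t) • (xv F α * w) := by
  rw [xv_eq_sum, Finset.sum_mul, Finset.smul_sum]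
  refine Finset.sum_congr rfl fun j _ => ?_
  rw [smul_mul_assoc, smul_smul]
  congr 1
  ring

lemma T_apply (D : DunklData m) (f : V m → A) (x : V m) (j : Fin m) :
    T D j f x = fderiv ℝ f x (EuclideanSpace.single j 1) +
      ∑ α ∈ D.Rplus, (D.κ α * (α j) / ⟪α, x⟫) • (f x - f (reflect α x)) := rfl

lemma Dirac_eq_parts (F : CliffordModel m A) (D : DunklData m) (f : V m → A) (x : V m) :
    Dirac F D f x = (∑ j, ee F j * fderiv ℝ f x (EuclideanSpace.single j 1))
      + ∑ α ∈ D.Rplus, (D.κ α / ⟪α,x⟫) • (xv F α * (f x - f (reflect α x))) := by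
  unfold Dirac
  simp only [T_apply, mul_add, Finset.mul_sum, mul_smul_comm]
  rw [Finset.sum_add_distrib]
  congr 1
  rw [Finset.sum_comm]
  exact Finset.sum_congr rfl fun α _ => sum_ee_mul F α (D.κ α) ⟪α,x⟫ _

lemma T_smul (D : DunklData m) {p : V m → ℝ} {p' : V m →L[ℝ] ℝ} {g : V m → A} {x : V m}
    (hp : HasFDerivAt p p' x) (hg : DifferentiableAt ℝ g x)
    (hinv : ∀ α ∈ D.Rplus, p (reflect α x) = p x) (j : Fin m) :
    T D j (fun y => p y • g y) x
      = p' (EuclideanSpace.single j 1) • g x + p x • T D j g x := by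
  rw [T_apply, T_apply, (hp.fun_smul hg.hasFDerivAt).fderiv]
  rw [Finset.sum_congr rfl (fun α hα => by
    beta_reduce
    rw [hinv α hα, ← smul_sub, smul_comm] :
      ∀ α ∈ D.Rplus, (D.κ α * (α j) / ⟪α, x⟫) • ((fun y => p y • g y) x - (fun y => p y • g y) (reflect α x))
        = p x • ((D.κ α * (α j) / ⟪α, x⟫) • (g x - g (reflect α x))))]
  rw [← Finset.smul_sum, smul_add]
  simp only [ContinuousLinearMap.add_apply, ContinuousLinearMap.coe_smul', Pi.smul_apply,
    ContinuousLinearMap.smulRight_apply]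
  abel

lemma Dirac_smul (F : CliffordModel m A) (D : DunklData m) {p : V m → ℝ} {s : ℝ}
    {g : V m → A} {x : V m}
    (hp : HasFDerivAt p (s • innerSL ℝ x) x) (hg : DifferentiableAt ℝ g x)
    (hinv : ∀ α ∈ D.Rplus, p (reflect α x) = p x) :
    Dirac F D (fun y => p y • g y) x = s • (xv F x * g x) + p x • Dirac F D g x := by
  unfold Dirac
  have hT : ∀ j : Fin m, T D j (fun y => p y • g y) x
      = (s * x j) • g x + p x • T D j g x := fun j => by
    rw [T_smul D hp hg hinv j]
    congr 2
    simp only [ContinuousLinearMap.coe_smul', Pi.smul_apply, innerSL_apply_apply, smul_eq_mul]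
    rw [EuclideanSpace.inner_single_right]
    simp
  simp only [hT, mul_add, mul_smul_comm]
  rw [Finset.sum_add_distrib]
  congr 1
  · rw [xv_eq_sum, Finset.sum_mul, Finset.smul_sum]
    refine Finset.sum_congr rfl fun j _ => ?_
    rw [smul_mul_assoc, smul_smul]
  · rw [Finset.smul_sum]

lemma T_sum (D : DunklData m) {ι : Type*} (s : Finset ι) (f : ι → V m → A) {x : V m}
    (hf : ∀ i ∈ s, DifferentiableAt ℝ (f i) x) (j : Fin m) :
    T D j (fun y => ∑ i ∈ s, f i y) x = ∑ i ∈ s, T D j (f i) x := by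
  simp only [T_apply]
  rw [fderiv_fun_sum hf]
  simp only [ContinuousLinearMap.coe_sum', Finset.sum_apply]
  rw [Finset.sum_add_distrib]
  congr 1
  rw [Finset.sum_comm]
  refine Finset.sum_congr rfl fun α _ => ?_
  rw [← Finset.smul_sum]
  congr 1
  rw [← Finset.sum_sub_distrib]

lemma Dirac_sum (F : CliffordModel m A) (D : DunklData m) {ι : Type*} (s : Finset ι)
    (f : ι → V m → A) {x : V m} (hf : ∀ i ∈ s, DifferentiableAt ℝ (f i) x) :
    Dirac F D (fun y => ∑ i ∈ s, f i y) x = ∑ i ∈ s, Dirac F D (f i) x := by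
  unfold Dirac
  simp only [T_sum D s f hf, Finset.mul_sum]
  rw [Finset.sum_comm]

lemma Dirac_const (F : CliffordModel m A) (D : DunklData m) (a : A) (x : V m) :
    Dirac F D (fun _ => a) x = 0 := by
  unfold Dirac T
  simp

end Aux3
section Aux4

variable {m : ℕ} {A : Type*} [NormedRing A] [NormedAlgebra ℝ A]

lemma algebraMap_mul_eq_smul (r : ℝ) (a : A) : algebraMap ℝ A r * a = r • a :=
  (Algebra.smul_def r a).symm

lemma xv_reflect (F : CliffordModel m A) {α : V m} (hα : ⟪α,α⟫ = (2:ℝ)) (x : V m) :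
    xv F (reflect α x) = xv F x - ⟪α,x⟫ • xv F α := by
  rw [reflect_eq hα, xv, map_sub, _root_.map_smul, map_sub, _root_.map_smul]
  rfl

lemma Dirac_xv_mul (F : CliffordModel m A) (D : DunklData m) {f : V m → A} {x : V m}
    (hx : x ∈ Reg D) (hf : DifferentiableAt ℝ f x) :
    Dirac F D (fun y => xv F y * f y) x
      = (-(mu D)) • f x - (2:ℝ) • fderiv ℝ f x x - xv F x * Dirac F D f x := by
  have hxv : HasFDerivAt (xv F) (xvL F) x := (xvL F).hasFDerivAt
  have hder : fderiv ℝ (fun y => xv F y * f y) x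
      = xv F x • fderiv ℝ f x + (xvL F).smulRight (f x) :=
    (hxv.mul' hf.hasFDerivAt).fderiv
  rw [Dirac_eq_parts]
  -- first sum: derivative part
  have hd : ∀ j : Fin m, ee F j * fderiv ℝ (fun y => xv F y * f y) x (EuclideanSpace.single j 1)
      = ((-2 * x j) • fderiv ℝ f x (EuclideanSpace.single j 1)
          - xv F x * (ee F j * fderiv ℝ f x (EuclideanSpace.single j 1)))
        + ee F j * (ee F j * f x) := by
    intro j
    rw [hder]
    simp only [ContinuousLinearMap.add_apply, ContinuousLinearMap.coe_smul', Pi.smul_apply,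
      ContinuousLinearMap.smulRight_apply]
    have hee : (xvL F) (EuclideanSpace.single j 1) = ee F j := rfl
    rw [hee, mul_add]
    congr 1
    -- ee j * (xv x • w) = (-2 x j) • w - xv x * (ee j * w)
    set w := fderiv ℝ f x (EuclideanSpace.single j 1)
    have : ee F j * (xv F x • w) = (ee F j * xv F x) * w := by
      rw [smul_eq_mul, mul_assoc]
    rw [this]
    have hac : ee F j * xv F x = algebraMap ℝ A (-(2 * ⟪(EuclideanSpace.single j 1 : V m), x⟫))
        - xv F x * ee F j := by
      have := xv_anticomm F (EuclideanSpace.single j (1:ℝ)) x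
      rw [ee]
      rw [show xv F (EuclideanSpace.single j (1:ℝ)) = F (CliffordAlgebra.ι (Q m) (EuclideanSpace.single j 1)) from rfl] at this
      linear_combination (norm := noncomm_ring) this
    rw [hac, sub_mul, algebraMap_mul_eq_smul]
    have hinner : ⟪(EuclideanSpace.single j 1 : V m), x⟫ = x j := by
      rw [EuclideanSpace.inner_single_left]
      simp
    rw [hinner, mul_assoc]
    congr 1
    ring_nf
  -- reflection part
  have hrefl : ∀ α ∈ D.Rplus,
      (D.κ α / ⟪α,x⟫) • (xv F α * ((fun y => xv F y * f y) x - (fun y => xv F y * f y) (reflect α x)))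
        = (-2 * D.κ α) • f x
          - xv F x * ((D.κ α / ⟪α,x⟫) • (xv F α * (f x - f (reflect α x)))) := by
    intro α hα
    have ht : ⟪α,x⟫ ≠ 0 := hx α hα
    have h2 : ⟪α,α⟫ = (2:ℝ) := inner_self_two D hα
    have hnα : -‖α‖^2 = (-2 : ℝ) := by
      rw [← real_inner_self_eq_norm_sq, h2]
    have hB : xv F α * xv F α = algebraMap ℝ A (-2) := by
      rw [xv_mul_self, hnα]
    have hA : xv F α * xv F x = algebraMap ℝ A (-(2*⟪α,x⟫)) - xv F x * xv F α :=
      eq_sub_of_add_eq (xv_anticomm F α x)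
    beta_reduce
    rw [xv_reflect F h2 x]
    have e1 : xv F α * (xv F x * f x - (xv F x - ⟪α,x⟫ • xv F α) * f (reflect α x))
        = xv F α * xv F x * f x - xv F α * xv F x * f (reflect α x)
          + ⟪α,x⟫ • (xv F α * xv F α * f (reflect α x)) := by
      simp only [mul_sub, sub_mul, smul_mul_assoc, mul_smul_comm, mul_assoc]
      abel
    rw [e1, hA, hB]
    simp only [sub_mul, algebraMap_mul_eq_smul, mul_sub, mul_assoc, smul_sub, mul_smul_comm, smul_smul]
    set t : ℝ := ⟪α,x⟫ with hts
    match_scalars <;> field_simp [ht] <;> ring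
  rw [Finset.sum_congr rfl hrefl, Finset.sum_congr rfl (fun j (_ : j ∈ Finset.univ) => hd j)]
  -- split all the sums
  rw [Finset.sum_add_distrib, Finset.sum_sub_distrib, Finset.sum_sub_distrib]
  have ha : ∑ j : Fin m, (-2 * x j) • fderiv ℝ f x (EuclideanSpace.single j 1)
      = (-2:ℝ) • fderiv ℝ f x x := by
    have h1 : (-2:ℝ) • fderiv ℝ f x x
        = (-2:ℝ) • fderiv ℝ f x (∑ j, x j • EuclideanSpace.single j 1) := by
      rw [sum_single]
    rw [h1, _root_.map_sum, Finset.smul_sum]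
    refine Finset.sum_congr rfl fun j _ => ?_
    rw [(fderiv ℝ f x).map_smul, smul_smul]
  have hb : ∑ j : Fin m, ee F j * (ee F j * f x) = (-(m:ℝ)) • f x := by
    have hone : ∀ j : Fin m, ee F j * (ee F j * f x) = (-1:ℝ) • f x := by
      intro j
      rw [← mul_assoc]
      have hejx : ee F j = xv F (EuclideanSpace.single j (1:ℝ)) := rfl
      have heesq : ee F j * ee F j = algebraMap ℝ A (-1) := by
        rw [hejx, xv_mul_self]
        norm_num
      rw [heesq, algebraMap_mul_eq_smul]
    rw [Finset.sum_congr rfl fun j _ => hone j]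
    rw [Finset.sum_const, Finset.card_univ, Fintype.card_fin, ← Nat.cast_smul_eq_nsmul ℝ,
      smul_smul]
    congr 1
    ring
  have hc : ∑ j : Fin m, xv F x * (ee F j * fderiv ℝ f x (EuclideanSpace.single j 1))
      = xv F x * ∑ j : Fin m, ee F j * fderiv ℝ f x (EuclideanSpace.single j 1) := by
    rw [Finset.mul_sum]
  have hd2a : ∑ α ∈ D.Rplus, (-2 * D.κ α) • f x = (-2 * gammaK D) • f x := by
    rw [← Finset.sum_smul, gammaK, ← Finset.mul_sum]
  have hd2b : ∑ α ∈ D.Rplus, xv F x * ((D.κ α / ⟪α,x⟫) • (xv F α * (f x - f (reflect α x))))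
      = xv F x * ∑ α ∈ D.Rplus, (D.κ α / ⟪α,x⟫) • (xv F α * (f x - f (reflect α x))) := by
    rw [Finset.mul_sum]
  rw [ha, hb, hc, hd2a, hd2b, Dirac_eq_parts F D f x, mul_add, mu]
  match_scalars <;> ring

end Aux4
section Aux5

variable {m : ℕ} {A : Type*} [NormedRing A] [NormedAlgebra ℝ A]

lemma Dirac_xv (F : CliffordModel m A) (D : DunklData m) {x : V m} (hx : x ∈ Reg D) :
    Dirac F D (xv F) x = (-(mu D)) • (1:A) := by
  have h1 : (fun y => xv F y * (fun _ => (1:A)) y) = xv F := by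
    funext y
    simp
  have h := Dirac_xv_mul F D (f := fun _ => (1:A)) hx (differentiableAt_const (1:A))
  rw [h1, Dirac_const, fderiv_fun_const] at h
  simpa using h

lemma hasFDerivAt_p (a : ℝ) (i : ℕ) (x : V m) :
    HasFDerivAt (fun y : V m => a * (-‖y‖^2)^i)
      ((a * ((i:ℝ) * (-‖x‖^2)^(i-1) * (-2))) • innerSL ℝ x) x := by
  have h0 : HasFDerivAt (fun y : V m => ‖y‖^2) ((2:ℝ) • innerSL ℝ x) x := by
    have h := (hasStrictFDerivAt_norm_sq x).hasFDerivAt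
    refine h.congr_fderiv ?_
    ext v
    simp [two_smul]
  have h1 : HasFDerivAt (fun y : V m => -‖y‖^2) ((-2:ℝ) • innerSL ℝ x) x := by
    have := h0.fun_neg
    refine this.congr_fderiv ?_
    ext v
    simp
  have hpow : HasDerivAt (fun t : ℝ => t ^ i) ((i:ℝ) * (-‖x‖^2)^(i-1)) (-‖x‖^2) :=
    hasDerivAt_pow i _
  have h2 := (hpow.comp_hasFDerivAt x h1).const_mul a
  refine h2.congr_fderiv ?_
  ext v
  simp only [ContinuousLinearMap.coe_smul', Pi.smul_apply, innerSL_apply_apply, smul_eq_mul,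
    ContinuousLinearMap.smul_apply]
  ring

lemma p_reflect_inv (D : DunklData m) (a : ℝ) (i : ℕ) {x : V m} {α : V m}
    (hα : α ∈ D.Rplus) : a * (-‖reflect α x‖^2)^i = a * (-‖x‖^2)^i := by
  rw [norm_reflect_sq (inner_self_two D hα)]

lemma xv_pow_odd (F : CliffordModel m A) (x : V m) (i : ℕ) :
    xv F x ^ (2*i+1) = (-‖x‖^2)^i • xv F x := by
  induction i with
  | zero => simp
  | succ i ih =>
    have h : 2*(i+1)+1 = 2 + (2*i+1) := by ring
    rw [h, pow_add, pow_two, xv_mul_self, ih, mul_smul_comm, algebraMap_mul_eq_smul,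
      smul_smul, ← pow_succ]

end Aux5
section Aux6

variable {m : ℕ} {A : Type*} [NormedRing A] [NormedAlgebra ℝ A]

lemma key (F : CliffordModel m A) (D : DunklData m) {k : ℕ} {M : V m → A}
    (hM : IsInner F D k M) {x : V m} (hx : x ∈ Reg D) (hx0 : x ≠ 0)
    {p : V m → ℝ} {s : ℝ}
    (hp : HasFDerivAt p (s • innerSL ℝ x) x)
    (hinv : ∀ α ∈ D.Rplus, p (reflect α x) = p x) :
    Dirac F D (fun y => p y • (xv F y * M y)) x
      = (2*(k:ℝ)/‖x‖^2) • (xv F x * (p x • (xv F x * M x)))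
        + (Dirac F D (fun y => p y • xv F y) x) * M x := by
  have hMd : DifferentiableAt ℝ M x := hM.1.differentiable (by simp) x
  have hxvd : DifferentiableAt ℝ (xv F) x := (xvL F).differentiableAt
  have hxvM : DifferentiableAt ℝ (fun y => xv F y * M y) x := hxvd.mul hMd
  rw [Dirac_smul F D hp hxvM hinv, Dirac_smul F D hp hxvd hinv]
  have h1 : Dirac F D (fun y => xv F y * M y) x
      = (-(mu D)) • M x - (2:ℝ) • fderiv ℝ M x x - xv F x * Dirac F D M x :=
    Dirac_xv_mul F D hx hMd
  rw [h1, hM.2.2 x hx, euler_eq hM.1 hM.2.1 x]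
  simp only [mul_zero, sub_zero]
  have h2 : Dirac F D (xv F) x = (-(mu D)) • (1:A) := Dirac_xv F D hx
  rw [h2]
  have hxx : xv F x * xv F x = algebraMap ℝ A (-‖x‖^2) := xv_mul_self F x
  have hnx : ‖x‖^2 ≠ 0 := by
    simpa using hx0
  -- flatten
  have e1 : xv F x * (p x • (xv F x * M x)) = (p x * -‖x‖^2) • M x := by
    rw [mul_smul_comm, ← mul_assoc, hxx, algebraMap_mul_eq_smul, smul_smul, mul_comm]
  have e2 : s • (xv F x * xv F x) + p x • ((-(mu D)) • (1:A))
      = (s * -‖x‖^2 + p x * -(mu D)) • (1:A) := by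
    rw [hxx, Algebra.algebraMap_eq_smul_one, smul_smul, smul_smul, ← add_smul]
  have e0 : xv F x * (xv F x * M x) = (-‖x‖^2) • M x := by
    rw [← mul_assoc, hxx, algebraMap_mul_eq_smul]
  rw [e1, e2, e0, smul_mul_assoc, one_mul]
  match_scalars
  field_simp
  ring

end Aux6
/-- Recursion relations for the Clifford-Gegenbauer polynomials on `B(1)`:
`C^α_{2ℓ+1,μ,k} = -2(α+1) x̱ C^{α+1}_{2ℓ,μ,k} + (1-|x̱|²) D_k[C^{α+1}_{2ℓ,μ,k}]` and
`C^α_{2ℓ+2,μ,k} = -2(α+1) x̱ C^{α+1}_{2ℓ+1,μ,k}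
  + (1-|x̱|²)(2k (x̱/|x̱|²) C^{α+1}_{2ℓ+1,μ,k} + D_k[C^{α+1}_{2ℓ+1,μ,k}])`,
where in the second relation `D_k` acts on the polynomial part
`C^{α+1}_{2ℓ+1,μ,k}(x̱)` (an odd polynomial `c` in `x̱` with
`C^{α+1}_{2ℓ+1,μ}(M_k) = c ⬝ M_k`) alone. -/
theorem cg_recursions
    {m : ℕ} {A : Type*} [NormedRing A] [NormedAlgebra ℝ A]
    (F : CliffordModel m A) (D : DunklData m)
    (k : ℕ) (M : V m → A) (hM : IsInner F D k M) (α : ℝ) (ℓ : ℕ) :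
    -- first recursion relation
    (∀ x ∈ Reg D,
      CG F D α (2 * ℓ + 1) M x =
        (-(2 * (α + 1))) • (xv F x * CG F D (α + 1) (2 * ℓ) M x) +
          (1 - ‖x‖ ^ 2) • Dirac F D (CG F D (α + 1) (2 * ℓ)  M) x) ∧
    -- second recursion relation, in terms of the odd polynomial part `c`
    (∀ c : V m → A,
      (∃ (n : ℕ) (a : ℕ → ℝ), ∀ x : V m,
        c x = ∑ i ∈ Finset.range (n + 1), a i • xv F x ^ (2 * i + 1)) →
      (∀ x ∈ Reg D, CG F D (α + 1) (2 * ℓ + 1) M x = c x * M x) →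
      ∀ x ∈ Reg D, x ≠ 0 →
        CG F D α (2 * ℓ + 2) M x =
          (-(2 * (α + 1))) • (xv F x * (c x * M x)) +
            (1 - ‖x‖ ^ 2) •
              ((2 * (k : ℝ) / ‖x‖ ^ 2) • (xv F x * (c x * M x)) + Dirac F D c x * M x)) := by

  constructor
  · intro x hx
    show Dal F D α (CG F D (α + 1) (2 * ℓ) M) x = _
    unfold Dal
    rw [sub_eq_add_neg, ← neg_smul, add_comm]
  · rintro c ⟨n, a, hca⟩ hcM x hx hx0
    have hMd : DifferentiableAt ℝ M x := hM.1.differentiable (by simp) x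
    have hc' : ∀ y, c y = ∑ i ∈ Finset.range (n+1), (a i * (-‖y‖^2)^i) • xv F y := by
      intro y
      rw [hca y]
      refine Finset.sum_congr rfl fun i _ => ?_
      rw [xv_pow_odd, smul_smul]
    have hcMsum : ∀ y, c y * M y
        = ∑ i ∈ Finset.range (n+1), (a i * (-‖y‖^2)^i) • (xv F y * M y) := by
      intro y
      rw [hc' y, Finset.sum_mul]
      refine Finset.sum_congr rfl fun i _ => ?_
      rw [smul_mul_assoc]
    have hDcM : Dirac F D (fun y => c y * M y) x
        = ∑ i ∈ Finset.range (n+1),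
            Dirac F D (fun y => (a i * (-‖y‖^2)^i) • (xv F y * M y)) x := by
      rw [show (fun y => c y * M y)
          = (fun y => ∑ i ∈ Finset.range (n+1), (a i * (-‖y‖^2)^i) • (xv F y * M y))
          from funext hcMsum]
      exact Dirac_sum F D _ _ (fun i _ =>
        ((hasFDerivAt_p (a i) i x).differentiableAt).smul (((xvL F).differentiableAt).mul hMd))
    have hDc : Dirac F D c x
        = ∑ i ∈ Finset.range (n+1),
            Dirac F D (fun y => (a i * (-‖y‖^2)^i) • xv F y) x := by
      rw [show c = (fun y => ∑ i ∈ Finset.range (n+1), (a i * (-‖y‖^2)^i) • xv F y)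
          from funext hc']
      exact Dirac_sum F D _ _ (fun i _ =>
        ((hasFDerivAt_p (a i) i x).differentiableAt).smul ((xvL F).differentiableAt))
    have hkey : Dirac F D (fun y => c y * M y) x
        = (2*(k:ℝ)/‖x‖^2) • (xv F x * (c x * M x)) + Dirac F D c x * M x := by
      rw [hDcM, hDc]
      rw [Finset.sum_congr rfl (fun i (_ : i ∈ Finset.range (n+1)) =>
        key F D hM hx hx0 (hasFDerivAt_p (a i) i x)
          (fun β hβ => p_reflect_inv D (a i) i hβ))]
      rw [Finset.sum_add_distrib]
      congr 1
      · rw [← Finset.smul_sum, ← Finset.mul_sum, ← hcMsum x]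
      · rw [← Finset.sum_mul]
    have hCGd : Dirac F D (CG F D (α+1) (2*ℓ+1) M) x = Dirac F D (fun y => c y * M y) x := by
      refine Dirac_congr F D ?_ ?_
      · exact Filter.eventuallyEq_of_mem ((isOpen_reg D).mem_nhds hx) (fun y hy => hcM y hy)
      · intro β hβ
        exact hcM _ (reg_reflect D hx hβ)
    rw [show (2*ℓ+2) = (2*ℓ+1)+1 from rfl]
    show Dal F D α (CG F D (α+1) (2*ℓ+1) M) x = _
    unfold Dal
    rw [hCGd, hkey, hcM x hx]
    rw [sub_eq_add_neg, ← neg_smul, add_comm]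

end CGDunkl
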